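/- Let E be a real inner product space, let k ≥ 1 and M ≥ 1 be natural numbers, let x̂_1, …, x̂_k ∈ E be waypoints, let o_1, …, o_M ∈ E be obstacle centers with clearance radii l_1, …, l_M ≥ 0, let g ∈ E be a goal point, let ρ > 0, let 0 < η < η', and let Δx > 0. Suppose: (i) ‖x̂_{j+1} − x̂_j‖ ≤ Δx for every j ∈ {1, …, k−1}; (ii) ‖x̂_j − o_h‖ ≥ l_h + η' for every j ∈ {1, …, k} and every h ∈ {1, …, M}; (iii) ‖x̂_k − g‖ ≤ Δx; and (iv) Δx < min(ρ − η, min over h of 2·√((η' − η)² + 2·(l_h + η)·(η' − η))). Then: (a) for every x ∈ E, every j ∈ {1, …, k−1}, and every t ∈ [0,1], if ‖x − ((1 − t) • x̂_j + t • x̂_{j+1})‖ ≤ η then ‖x − o_h‖ > l_h for all h ∈ {1, …, M}; and (b) every x ∈ E with ‖x − x̂_k‖ ≤ η satisfies ‖x − g‖ < ρ, i.e., x lies in the open ball of radius ρ around g. -/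

import Mathlib

/-!
A point `p` of a segment `[a, b]` satisfies
`‖p - c‖² = (1 - t)‖a - c‖² + t‖b - c‖² - t(1 - t)‖b - a‖²`, so if both endpoints are at
distance at least `R` from `c` and the segment has length at most `Δx`, then
`‖p - c‖² ≥ R² - Δx²/4`. With `R = l + η'` and `r = l + η`, the step-size bound says exactly
`Δx²/4 < R² - r²`, so the whole polyline stays at distance more than `l + η` from each obstacle,
and a tracking error of at most `η` keeps the trajectory outside the clearance radius `l`.
Reaching the goal is the triangle inequality `‖x - g‖ ≤ η + Δx < ρ`.
-/

section Segment

variable {E : Type*} [NormedAddCommGroup E] [InnerProductSpace ℝ E]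

theorem norm_segment_sub_sq (a b c : E) (t : ℝ) :
    ‖(1 - t) • a + t • b - c‖ ^ 2
      = (1 - t) * ‖a - c‖ ^ 2 + t * ‖b - c‖ ^ 2 - t * (1 - t) * ‖b - a‖ ^ 2 := by
  have hp : (1 - t) • a + t • b - c = (1 - t) • (a - c) + t • (b - c) := by module
  have hba : b - a = (b - c) - (a - c) := by abel
  rw [hp, hba]
  simp only [← real_inner_self_eq_norm_sq, inner_add_add_self, inner_sub_sub_self,
    real_inner_smul_left, real_inner_smul_right, real_inner_comm (a - c) (b - c)]
  ring

theorem sq_sub_sq_div_four_le_norm_segment_sub_sq {a b c : E} {R Δ t : ℝ} (hR : 0 ≤ R)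
    (ha : R ≤ ‖a - c‖) (hb : R ≤ ‖b - c‖) (hab : ‖b - a‖ ≤ Δ) (ht : t ∈ Set.Icc (0 : ℝ) 1) :
    R ^ 2 - Δ ^ 2 / 4 ≤ ‖(1 - t) • a + t • b - c‖ ^ 2 := by
  obtain ⟨ht0, ht1⟩ := ht
  have hconv : R ^ 2 ≤ (1 - t) * ‖a - c‖ ^ 2 + t * ‖b - c‖ ^ 2 := by
    have ha2 : R ^ 2 ≤ ‖a - c‖ ^ 2 := pow_le_pow_left₀ hR ha 2
    have hb2 : R ^ 2 ≤ ‖b - c‖ ^ 2 := pow_le_pow_left₀ hR hb 2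
    nlinarith
  have hshort : t * (1 - t) * ‖b - a‖ ^ 2 ≤ Δ ^ 2 / 4 := by
    have hab2 : ‖b - a‖ ^ 2 ≤ Δ ^ 2 := pow_le_pow_left₀ (norm_nonneg _) hab 2
    have ht4 : t * (1 - t) ≤ 1 / 4 := by nlinarith [sq_nonneg (2 * t - 1)]
    nlinarith [mul_nonneg ht0 (sub_nonneg.mpr ht1), sq_nonneg ‖b - a‖]
  rw [norm_segment_sub_sq]
  linarith

theorem lt_norm_segment_sub {a b c : E} {r R Δ t : ℝ} (hR : 0 ≤ R)
    (ha : R ≤ ‖a - c‖) (hb : R ≤ ‖b - c‖) (hab : ‖b - a‖ ≤ Δ) (ht : t ∈ Set.Icc (0 : ℝ) 1)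
    (hΔ : Δ < 2 * √(R ^ 2 - r ^ 2)) :
    r < ‖(1 - t) • a + t • b - c‖ := by
  have hΔ2 : Δ ^ 2 / 4 < R ^ 2 - r ^ 2 := by
    have h := (Real.lt_sqrt (by linarith [(norm_nonneg _).trans hab])).mp
      (show Δ / 2 < √(R ^ 2 - r ^ 2) by linarith)
    linarith
  refine lt_of_pow_lt_pow_left₀ 2 (norm_nonneg _) ?_
  linarith [sq_sub_sq_div_four_le_norm_segment_sub_sq hR ha hb hab ht]

end Segment

theorem tracked_polyline_safe_and_reaches_goal_general
    {E : Type*} [NormedAddCommGroup E] [InnerProductSpace ℝ E]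
    (k M : ℕ) (hk : 1 ≤ k) (hM : 1 ≤ M)
    (xh : Fin k → E) (o : Fin M → E) (l : Fin M → ℝ) (hl : ∀ h, 0 ≤ l h)
    (g : E) (ρ η η' Δx : ℝ) (hηη' : η < η')
    (hstep : ∀ (j : ℕ) (hj : j + 1 < k),
      ‖xh ⟨j + 1, hj⟩ - xh ⟨j, Nat.lt_of_succ_lt hj⟩‖ ≤ Δx)
    (hclear : ∀ (j : Fin k) (h : Fin M), l h + η' ≤ ‖xh j - o h‖)
    (hgoal : ‖xh ⟨k - 1, Nat.sub_lt hk Nat.one_pos⟩ - g‖ ≤ Δx)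
    (hbound : Δx < min (ρ - η)
      (Finset.univ.inf' (Finset.univ_nonempty_iff.mpr ⟨⟨0, hM⟩⟩)
        (fun h : Fin M =>
          2 * Real.sqrt ((η' - η) ^ 2 + 2 * (l h + η) * (η' - η))))) :
    (∀ (x : E) (j : ℕ) (hj : j + 1 < k) (t : ℝ), t ∈ Set.Icc (0 : ℝ) 1 →
      ‖x - ((1 - t) • xh ⟨j, Nat.lt_of_succ_lt hj⟩ + t • xh ⟨j + 1, hj⟩)‖ ≤ η →
      ∀ h : Fin M, l h < ‖x - o h‖) ∧
    (∀ x : E, ‖x - xh ⟨k - 1, Nat.sub_lt hk Nat.one_pos⟩‖ ≤ η → ‖x - g‖ < ρ) := by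
  obtain ⟨hgoalStep, hobstacleStep⟩ := lt_min_iff.mp hbound
  refine ⟨fun x j hj t ht hx h => ?_, fun x hx => ?_⟩
  · have hΔ := (Finset.lt_inf'_iff _).mp hobstacleStep h (Finset.mem_univ h)
    rw [show (η' - η) ^ 2 + 2 * (l h + η) * (η' - η) = (l h + η') ^ 2 - (l h + η) ^ 2 by ring]
      at hΔ
    have hR : 0 ≤ l h + η' := by linarith [hl h, (norm_nonneg _).trans hx]
    have hpath := lt_norm_segment_sub hR (hclear _ h) (hclear _ h) (hstep j hj) ht hΔ
    have htrack := norm_sub_le_norm_sub_add_norm_sub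
      ((1 - t) • xh ⟨j, Nat.lt_of_succ_lt hj⟩ + t • xh ⟨j + 1, hj⟩) x (o h)
    rw [norm_sub_rev] at hx
    linarith
  · linarith [norm_sub_le_norm_sub_add_norm_sub x (xh ⟨k - 1, Nat.sub_lt hk Nat.one_pos⟩) g]

/-- Geometric content of the paper's Theorem: a planner with step size
`Δx < min(ρ − η, min_h 2·√((η' − η)² + 2·(l h + η)·(η' − η)))`, planning through
states farther than `l h + η'` from every obstacle center and ending within `Δx`
of the goal `g`, yields (a) any trajectory tracking the polyline with error at
most `η` avoids every true clearance region of radius `l h`, and (b) the tracked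
endpoint lies in the open ball of radius `ρ` around `g`. -/
theorem tracked_polyline_safe_and_reaches_goal
    {E : Type*} [NormedAddCommGroup E] [InnerProductSpace ℝ E]
    (k M : ℕ) (hk : 1 ≤ k) (hM : 1 ≤ M)
    (xh : Fin k → E) (o : Fin M → E) (l : Fin M → ℝ) (hl : ∀ h, 0 ≤ l h)
    (g : E) (ρ η η' Δx : ℝ) (hρ : 0 < ρ) (hη : 0 < η) (hηη' : η < η') (hΔx : 0 < Δx)
    (hstep : ∀ (j : ℕ) (hj : j + 1 < k),
      ‖xh ⟨j + 1, hj⟩ - xh ⟨j, Nat.lt_of_succ_lt hj⟩‖ ≤ Δx)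
    (hclear : ∀ (j : Fin k) (h : Fin M), l h + η' ≤ ‖xh j - o h‖)
    (hgoal : ‖xh ⟨k - 1, Nat.sub_lt hk Nat.one_pos⟩ - g‖ ≤ Δx)
    (hbound : Δx < min (ρ - η)
      (Finset.univ.inf' (Finset.univ_nonempty_iff.mpr ⟨⟨0, hM⟩⟩)
        (fun h : Fin M =>
          2 * Real.sqrt ((η' - η) ^ 2 + 2 * (l h + η) * (η' - η))))) :
    (∀ (x : E) (j : ℕ) (hj : j + 1 < k) (t : ℝ), t ∈ Set.Icc (0 : ℝ) 1 →
      ‖x - ((1 - t) • xh ⟨j, Nat.lt_of_succ_lt hj⟩ + t • xh ⟨j + 1, hj⟩)‖ ≤ η →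
      ∀ h : Fin M, l h < ‖x - o h‖) ∧
    (∀ x : E, ‖x - xh ⟨k - 1, Nat.sub_lt hk Nat.one_pos⟩‖ ≤ η → ‖x - g‖ < ρ) :=
  tracked_polyline_safe_and_reaches_goal_general k M hk hM xh o l hl g ρ η η' Δx hηη' hstep hclear
    hgoal hbound
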